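/- (Closure property) Let f : {0,1}^n → {0,1} be a Boolean function, i ∈ [n], and b ∈ {0,1}. Then U1(f, U(f_{ib})) ⊆ U(f_{ib}) ∪ {i}. -/

import Mathlib

/-- `f` depends on variable `i`: flipping the `i`-th coordinate of some input changes the value. -/
def BoolDependsOn {ι : Type*} [DecidableEq ι] (f : (ι → Bool) → Bool) (i : ι) : Prop :=
  ∃ a : ι → Bool, f (Function.update a i (!a i)) ≠ f a

/-- The restriction `f|_{x_j = b}`, a Boolean function on the remaining variables. -/
def restrictBit {ι : Type*} [DecidableEq ι] (f : (ι → Bool) → Bool) (j : ι) (b : Bool) :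
    ({i : ι // i ≠ j} → Bool) → Bool :=
  fun y => f (fun i => if h : i = j then b else y ⟨i, h⟩)

/-- `k ∈ U(f_{jb})`: variable `k` (a variable of `f_{jb}`, i.e. `k ≠ j`) is useless for the
restriction `f_{jb}`. -/
def UselessIn {ι : Type*} [DecidableEq ι] (f : (ι → Bool) → Bool) (j : ι) (b : Bool)
    (k : ι) : Prop :=
  ∃ h : k ≠ j, ¬ BoolDependsOn (restrictBit f j b) ⟨k, h⟩

/-- `U(f_{ib})` as a set of indices in `[n]`. -/
def Uset {n : ℕ} (f : (Fin n → Bool) → Bool) (i : Fin n) (b : Bool) : Set (Fin n) :=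
  {k | UselessIn f i b k}

/-- `U1(f, S) = ⋃_{j ∈ S} (U(f_{j0}) ∪ U(f_{j1}))`. -/
def U1 {n : ℕ} (f : (Fin n → Bool) → Bool) (S : Set (Fin n)) : Set (Fin n) :=
  ⋃ j ∈ S, (Uset f j false ∪ Uset f j true)

/-! If `j` is useless for `f` once `x_i = b`, then under `x_i = b` the value of `f` does not
change when `x_j` is set to any `c`. So to move `x_k` (with `k ≠ i`), first set `x_j := c`,
where `k` is useless, move `x_k` there, and reset `x_j`. -/

open Function

section Restriction

variable {ι : Type*} [DecidableEq ι]

def extendBit (j : ι) (c : Bool) (y : {i : ι // i ≠ j} → Bool) : ι → Bool :=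
  fun i => if h : i = j then c else y ⟨i, h⟩

lemma restrictBit_apply (f : (ι → Bool) → Bool) (j : ι) (c : Bool) (y : {i : ι // i ≠ j} → Bool) :
    restrictBit f j c y = f (extendBit j c y) :=
  rfl

lemma extendBit_self (j : ι) (c : Bool) (y : {i : ι // i ≠ j} → Bool) :
    extendBit j c y j = c := by
  simp [extendBit]

lemma extendBit_restrict {j : ι} {c : Bool} {a : ι → Bool} (ha : a j = c) :
    extendBit j c (fun p => a p.1) = a := by
  funext i
  by_cases hi : i = j
  · subst hi; simp [extendBit, ha]
  · simp [extendBit, hi]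

lemma extendBit_update (j : ι) (c : Bool) (y : {i : ι // i ≠ j} → Bool) {k : ι} (hk : k ≠ j)
    (v : Bool) : extendBit j c (update y ⟨k, hk⟩ v) = update (extendBit j c y) k v := by
  funext i
  by_cases hi : i = j
  · subst hi; simp [extendBit, hk.symm]
  · by_cases hik : i = k
    · subst hik; simp [extendBit, hi]
    · simp [extendBit, hi, hik]

theorem uselessIn_iff {f : (ι → Bool) → Bool} {j k : ι} {c : Bool} :
    UselessIn f j c k ↔ k ≠ j ∧ ∀ a : ι → Bool, a j = c → ∀ v, f (update a k v) = f a := by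
  refine ⟨fun ⟨hk, H⟩ => ⟨hk, fun a ha v => ?_⟩, fun ⟨hk, H⟩ => ⟨hk, fun ⟨y, hy⟩ => hy ?_⟩⟩
  · have key : f (update a k (!a k)) = f a := by
      by_contra hne
      refine H ⟨fun p => a p.1, ?_⟩
      rwa [restrictBit_apply, restrictBit_apply, extendBit_update j c _ hk,
        extendBit_restrict ha]
    rcases Bool.eq_or_eq_not v (a k) with rfl | rfl
    · rw [update_eq_self]
    · exact key
  · rw [restrictBit_apply, restrictBit_apply, extendBit_update j c y hk]
    exact H _ (extendBit_self j c y) _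

theorem UselessIn.trans {f : (ι → Bool) → Bool} {i j k : ι} {b c : Bool}
    (hj : UselessIn f i b j) (hk : UselessIn f j c k) (hki : k ≠ i) : UselessIn f i b k := by
  rw [uselessIn_iff] at hj hk ⊢
  obtain ⟨-, hj⟩ := hj
  obtain ⟨hkj, hk⟩ := hk
  refine ⟨hki, fun a ha v => ?_⟩
  calc f (update a k v)
      = f (update (update a k v) j c) := (hj _ (by rwa [update_of_ne hki.symm]) c).symm
    _ = f (update (update a j c) k v) := by rw [update_comm hkj]
    _ = f (update a j c) := hk _ (update_self j c a) v
    _ = f a := hj a ha c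

end Restriction

/-- Closure property: `U1(f, U(f_{ib})) ⊆ U(f_{ib}) ∪ {i}`. -/
theorem closure_property (n : ℕ) (f : (Fin n → Bool) → Bool) (i : Fin n) (b : Bool) :
    U1 f (Uset f i b) ⊆ Uset f i b ∪ {i} := by
  intro k hk
  simp only [U1, Set.mem_iUnion] at hk
  obtain ⟨j, hj, hk⟩ := hk
  by_cases hki : k = i
  · exact Or.inr hki
  · obtain ⟨c, hk⟩ : ∃ c, UselessIn f j c k := hk.elim (⟨false, ·⟩) (⟨true, ·⟩)
    exact Or.inl (UselessIn.trans hj hk hki)
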